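/- There exists n₀ such that for every integer n ≥ n₀ and every set T ⊆ {1, 2, …, 4n} with |T| ≤ (ln n)/4, the number of subsets C ⊆ {1, 2, …, 2n} satisfying (C + k) ∩ T ≠ ∅ for every k ∈ {0, 1, …, 2n} is at most 2·exp(−n^{1/4})·2^{2n}. -/

import Mathlib

/-! If no multiple `j * s` with `1 ≤ j ≤ m` is a difference of two elements of `T`, the translates
`T - j * s` (`0 ≤ j < m`) are pairwise disjoint, and counting quotients `d / j` shows that such a
step `s ≤ |T|² m + 1` exists. A set `C` supported by `T` at every offset `j * s` meets each of
these `m` disjoint sets of size at most `t = |T|`, and the sets doing so form at most a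
`(1 - 2^(-t))^m ≤ exp (-m 2^(-t))` fraction of all `C`. For `m = ⌈n^(9/20)⌉` all offsets
stay below `2n`, while `2^t ≤ n^(1/5)` gives `m 2^(-t) ≥ n^(1/4)`. -/

open Finset Real Filter
open scoped Pointwise

section Counting

variable {α : Type*} [DecidableEq α]

lemma card_filter_powerset_inter_nonempty_and {U S : Finset α} (hSU : S ⊆ U)
    (p : Finset α → Prop) [DecidablePred p] (hp : ∀ C, p C ↔ p (C \ S)) :
    #{C ∈ U.powerset | (C ∩ S).Nonempty ∧ p C} = (2 ^ #S - 1) * #{C ∈ (U \ S).powerset | p C} := by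
  have hne : #{A ∈ S.powerset | A.Nonempty} = 2 ^ #S - 1 := by
    simp_rw [nonempty_iff_ne_empty, filter_ne', card_erase_of_mem (empty_mem_powerset S),
      card_powerset]
  have hsplit {A B : Finset α} (hA : A ⊆ S) (hB : B ⊆ U \ S) :
      (A ∪ B) ∩ S = A ∧ (A ∪ B) \ S = B := by
    constructor <;> ext <;> grind
  rw [← hne, ← card_product, ← filter_product]
  refine card_nbij' (fun C ↦ (C ∩ S, C \ S)) (fun P ↦ P.1 ∪ P.2) ?_ ?_ ?_ ?_
  · intro C hC
    simp only [coe_filter, mem_product, mem_powerset, Set.mem_ofPred_eq] at hC ⊢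
    obtain ⟨hCU, hCS, hpC⟩ := hC
    exact ⟨⟨inter_subset_right, sdiff_subset_sdiff hCU subset_rfl⟩, hCS, (hp C).1 hpC⟩
  · rintro ⟨A, B⟩ h
    simp only [coe_filter, mem_product, mem_powerset, Set.mem_ofPred_eq] at h ⊢
    obtain ⟨⟨hAS, hBU⟩, hA, hpB⟩ := h
    obtain ⟨h1, h2⟩ := hsplit hAS hBU
    exact ⟨union_subset (hAS.trans hSU) (hBU.trans sdiff_subset), by rwa [h1],
      (hp _).2 (by rwa [h2])⟩
  · intro C _
    exact sup_inf_sdiff C S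
  · rintro ⟨A, B⟩ h
    simp only [coe_filter, mem_product, mem_powerset, Set.mem_ofPred_eq] at h
    obtain ⟨h1, h2⟩ := hsplit h.1.1 h.1.2
    exact Prod.ext h1 h2

lemma one_sub_inv_two_pow_nonneg (t : ℕ) : (0 : ℝ) ≤ 1 - 2⁻¹ ^ t :=
  sub_nonneg.2 (pow_le_one₀ (by norm_num) (by norm_num))

lemma two_pow_sub_one_le {k t : ℕ} (h : k ≤ t) : (2 : ℝ) ^ k - 1 ≤ (1 - 2⁻¹ ^ t) * 2 ^ k := by
  have : (2 : ℝ) ^ k ≤ 2 ^ t := pow_le_pow_right₀ one_le_two h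
  rw [sub_mul, one_mul, inv_pow, inv_mul_eq_div]
  gcongr
  rwa [div_le_one (by positivity)]

theorem card_filter_powerset_forall_inter_nonempty_le {ι : Type*} [DecidableEq ι]
    {s : Finset ι} {S : ι → Finset α} {U : Finset α} {t : ℕ}
    (hdisj : (s : Set ι).PairwiseDisjoint S) (hSU : ∀ i ∈ s, S i ⊆ U)
    (hSt : ∀ i ∈ s, #(S i) ≤ t) :
    (#{C ∈ U.powerset | ∀ i ∈ s, (C ∩ S i).Nonempty} : ℝ) ≤ (1 - 2⁻¹ ^ t) ^ #s * 2 ^ #U := by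
  induction s using Finset.induction_on generalizing U with
  | empty => simp
  | insert a s ha ih =>
    rw [coe_insert, Set.pairwiseDisjoint_insert] at hdisj
    simp only [forall_mem_insert] at hSU hSt ⊢
    have hdisj_a (i) (hi : i ∈ s) : Disjoint (S a) (S i) := hdisj.2 i hi (by grind)
    have hrest (C : Finset α) :
        (∀ i ∈ s, (C ∩ S i).Nonempty) ↔ ∀ i ∈ s, (C \ S a ∩ S i).Nonempty := by
      refine forall₂_congr fun i hi ↦ ?_
      rw [sdiff_inter_right_comm,
        sdiff_eq_self_of_disjoint ((hdisj_a i hi).symm.mono_left inter_subset_right)]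
    have hIH := ih hdisj.1 (U := U \ S a)
      (fun i hi ↦ subset_sdiff.2 ⟨hSU.2 i hi, (hdisj_a i hi).symm⟩) hSt.2
    rw [card_filter_powerset_inter_nonempty_and hSU.1 _ hrest, card_insert_of_notMem ha,
      ← card_sdiff_add_card_eq_card hSU.1, Nat.cast_mul, Nat.cast_sub Nat.one_le_two_pow,
      Nat.cast_pow, Nat.cast_ofNat, Nat.cast_one]
    calc _ ≤ ((1 - 2⁻¹ ^ t) * 2 ^ #(S a)) * ((1 - (2 : ℝ)⁻¹ ^ t) ^ #s * 2 ^ #(U \ S a)) :=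
          mul_le_mul (two_pow_sub_one_le hSt.1) hIH (Nat.cast_nonneg _)
            (mul_nonneg (one_sub_inv_two_pow_nonneg t) (by positivity))
      _ = _ := by ring

end Counting

lemma exists_mem_Icc_forall_mul_notMem (D : Finset ℤ) (m : ℕ) :
    ∃ s ∈ Icc (1 : ℤ) (#D * m + 1), ∀ j ∈ Icc (1 : ℤ) m, j * s ∉ D := by
  -- a step `s` with `j * s = d` is `d / j`
  set B := (D ×ˢ Icc (1 : ℤ) m).image fun p ↦ p.1 / p.2
  have hB : #B < #(Icc (1 : ℤ) (#D * m + 1)) := by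
    calc #B ≤ #(D ×ˢ Icc (1 : ℤ) m) := card_image_le
      _ < #(Icc (1 : ℤ) (#D * m + 1)) := by simp
  obtain ⟨s, hs, hsB⟩ := exists_mem_notMem_of_card_lt_card hB
  refine ⟨s, hs, fun j hj hjs ↦ hsB (mem_image.2 ⟨(j * s, j), mem_product.2 ⟨hjs, hj⟩, ?_⟩)⟩
  exact Int.mul_ediv_cancel_left _ (by grind)

lemma pairwiseDisjoint_image_sub_mul {T : Finset ℤ} {s : ℤ} {m : ℕ}
    (hs : ∀ j ∈ Icc (1 : ℤ) m, j * s ∉ T - T) :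
    (range m : Set ℕ).PairwiseDisjoint fun j ↦ T.image (· - j * s) := by
  have key {i j : ℕ} (hij : i < j) (hj : j < m) :
      Disjoint (T.image (· - i * s)) (T.image (· - j * s)) := by
    refine disjoint_left.2 fun x hxi hxj ↦ ?_
    obtain ⟨a, ha, rfl⟩ := mem_image.1 hxi
    obtain ⟨b, hb, hab⟩ := mem_image.1 hxj
    refine hs ((j : ℤ) - i) (by rw [mem_Icc]; omega) ?_
    convert sub_mem_sub hb ha using 1
    linarith
  intro i hi j hj hij
  rcases hij.lt_or_gt with h | h
  · exact key h (by simpa using hj)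
  · exact (key h (by simpa using hi)).symm

lemma image_add_inter_nonempty_iff {C T : Finset ℤ} {k : ℤ} :
    (C.image (· + k) ∩ T).Nonempty ↔ (C ∩ T.image (· - k)).Nonempty := by
  simp only [Finset.Nonempty, mem_inter, mem_image]
  constructor
  · rintro ⟨_, ⟨c, hc, rfl⟩, hT⟩
    exact ⟨c, hc, c + k, hT, add_sub_cancel_right c k⟩
  · rintro ⟨c, hc, x, hx, rfl⟩
    exact ⟨x, ⟨x - k, hc, sub_add_cancel x k⟩, hx⟩

theorem card_filter_powerset_forall_image_add_inter_nonempty_le (T U : Finset ℤ) {m : ℕ} {K : ℤ}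
    (hK : m * (#T ^ 2 * m + 1) ≤ K) :
    (#(U.powerset.filter fun C : Finset ℤ ↦ ∀ k ∈ Icc 0 K, (C.image (· + k) ∩ T).Nonempty) : ℝ)
      ≤ (1 - 2⁻¹ ^ #T) ^ m * 2 ^ #U := by
  obtain ⟨s, hs, hsT⟩ := exists_mem_Icc_forall_mul_notMem (T - T) m
  have hs_le : s ≤ #T ^ 2 * m + 1 := by
    have : #(T - T) ≤ #T ^ 2 := (card_sub_le).trans_eq (sq _).symm
    have := (mem_Icc.1 hs).2
    nlinarith
  have hoffset {j : ℕ} (hj : j < m) : (j : ℤ) * s ∈ Icc 0 K := by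
    have := (mem_Icc.1 hs).1
    refine mem_Icc.2 ⟨by positivity, le_trans ?_ hK⟩
    gcongr
  let S (j : ℕ) := T.image (· - j * s) ∩ U
  have hcount := card_filter_powerset_forall_inter_nonempty_le (s := range m) (S := S) (t := #T)
    ((pairwiseDisjoint_image_sub_mul hsT).mono fun _ ↦ inter_subset_left)
    (fun _ _ ↦ inter_subset_right) (fun _ _ ↦ (card_le_card inter_subset_left).trans card_image_le)
  rw [card_range] at hcount
  refine le_trans (Nat.cast_le.2 (card_le_card fun C ↦ ?_)) hcount
  simp only [mem_filter, mem_powerset, mem_range]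
  refine fun ⟨hCU, hC⟩ ↦ ⟨hCU, fun j hj ↦ ?_⟩
  obtain ⟨c, hc⟩ := image_add_inter_nonempty_iff.1 (hC _ (hoffset hj))
  exact ⟨c, by simp only [S, mem_inter] at hc ⊢; exact ⟨hc.1, hc.2, hCU hc.1⟩⟩

lemma two_pow_le_rpow_of_le_log_div_four {x : ℝ} (hx : 0 < x) {t : ℕ}
    (ht : (t : ℝ) ≤ log x / 4) : (2 : ℝ) ^ t ≤ x ^ (1 / 5 : ℝ) := by
  have hlog : 0 ≤ log x := by linarith [t.cast_nonneg (α := ℝ)]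
  rw [← rpow_natCast, rpow_def_of_pos two_pos, rpow_def_of_pos hx, exp_le_exp]
  -- uses `log 2 / 4 < 1 / 5`
  have hlog2 : 0 < log 2 := log_pos one_lt_two
  nlinarith [log_two_lt_d9, mul_le_mul_of_nonneg_left ht hlog2.le]

lemma one_sub_inv_two_pow_pow_le_exp {x : ℝ} (hx : 0 < x) {t m : ℕ}
    (ht : (t : ℝ) ≤ log x / 4) (hm : x ^ (9 / 20 : ℝ) ≤ m) :
    (1 - 2⁻¹ ^ t : ℝ) ^ m ≤ exp (-x ^ (1 / 4 : ℝ)) := by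
  have hx_le : x ^ (1 / 4 : ℝ) ≤ m * 2⁻¹ ^ t := by
    rw [inv_pow, ← div_eq_mul_inv, le_div_iff₀ (by positivity)]
    calc x ^ (1 / 4 : ℝ) * 2 ^ t ≤ x ^ (1 / 4 : ℝ) * x ^ (1 / 5 : ℝ) := by
          gcongr; exact two_pow_le_rpow_of_le_log_div_four hx ht
      _ = x ^ (9 / 20 : ℝ) := by rw [← rpow_add hx]; norm_num
      _ ≤ m := hm
  calc (1 - 2⁻¹ ^ t : ℝ) ^ m ≤ exp (-2⁻¹ ^ t) ^ m := by
        gcongr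
        · exact one_sub_inv_two_pow_nonneg t
        · exact one_sub_le_exp_neg _
    _ = exp (-(m * 2⁻¹ ^ t)) := by rw [← exp_nat_mul]; ring_nf
    _ ≤ exp (-x ^ (1 / 4 : ℝ)) := by gcongr

lemma exists_mul_le_two_mul_and_pow_le_exp {n : ℕ} (hn : 1 ≤ n)
    (hlog : log n ^ 2 ≤ (n : ℝ) ^ (1 / 20 : ℝ)) {t : ℕ} (ht : (t : ℝ) ≤ log n / 4) :
    ∃ m : ℕ, m * (t ^ 2 * m + 1) ≤ 2 * n ∧
      (1 - 2⁻¹ ^ t : ℝ) ^ m ≤ exp (-(n : ℝ) ^ (1 / 4 : ℝ)) := by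
  have hn' : (1 : ℝ) ≤ n := by exact_mod_cast hn
  set y := (n : ℝ) ^ (9 / 20 : ℝ) with hy
  refine ⟨⌈y⌉₊, ?_, one_sub_inv_two_pow_pow_le_exp (by positivity) ht (Nat.le_ceil y)⟩
  have hm_le_n : ⌈y⌉₊ ≤ n := Nat.ceil_le.2 <| by
    simpa using rpow_le_rpow_of_exponent_le hn' (by norm_num : (9 / 20 : ℝ) ≤ 1)
  have hm_le_y : (⌈y⌉₊ : ℝ) ≤ 2 * y := by
    have := Nat.ceil_lt_add_one (by positivity : 0 ≤ y)
    have := one_le_rpow hn' (by norm_num : (0 : ℝ) ≤ 9 / 20)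
    linarith
  have hy_sq : y ^ 2 * (n : ℝ) ^ (1 / 20 : ℝ) ≤ n := by
    rw [hy, ← rpow_natCast, ← rpow_mul (by positivity), ← rpow_add (by positivity)]
    simpa using rpow_le_rpow_of_exponent_le hn' (by norm_num : (9 / 20 * 2 + 1 / 20 : ℝ) ≤ 1)
  have ht_sq : (t : ℝ) ^ 2 ≤ (n : ℝ) ^ (1 / 20 : ℝ) / 16 := by
    nlinarith [t.cast_nonneg (α := ℝ)]
  have hmt : (⌈y⌉₊ : ℝ) ^ 2 * t ^ 2 ≤ n := by
    calc (⌈y⌉₊ : ℝ) ^ 2 * (t : ℝ) ^ 2 ≤ (2 * y) ^ 2 * ((n : ℝ) ^ (1 / 20 : ℝ) / 16) := by gcongr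
      _ ≤ (n : ℝ) := by nlinarith
  have : (⌈y⌉₊ * (t ^ 2 * ⌈y⌉₊ + 1) : ℝ) ≤ 2 * n := by
    have : (⌈y⌉₊ : ℝ) ≤ n := by exact_mod_cast hm_le_n
    nlinarith
  exact_mod_cast this

lemma eventually_log_sq_le_rpow : ∀ᶠ n : ℕ in atTop, log n ^ 2 ≤ (n : ℝ) ^ (1 / 20 : ℝ) := by
  have h := (isLittleO_log_rpow_rpow_atTop 2 (by norm_num : (0 : ℝ) < 1 / 20)).bound one_pos
  filter_upwards [tendsto_natCast_atTop_atTop.eventually (h.and (eventually_ge_atTop 1))]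
    with n ⟨hn, h1⟩
  rwa [one_mul, rpow_two, norm_of_nonneg (by positivity),
    norm_of_nonneg (rpow_nonneg (by positivity) _)] at hn

/-- **McDiarmid concentration step (counting form).** For all sufficiently large `n` and any
track `T ⊆ {1, …, 4n}` with `|T| ≤ (ln n)/4`, at most a `2·exp(-n^(1/4))` fraction of the
subsets `C ⊆ {1, …, 2n}` are supported by `T` at every offset `k ∈ {0, …, 2n}`. -/
theorem mcdiarmid_counting_step : ∃ n₀ : ℕ, ∀ n : ℕ, n₀ ≤ n →
    ∀ T ⊆ Finset.Icc (1 : ℤ) (4 * n : ℕ), (T.card : ℝ) ≤ Real.log n / 4 →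
      ((((Finset.Icc (1 : ℤ) (2 * n : ℕ)).powerset.filter (fun C : Finset ℤ =>
          ∀ k ∈ Finset.Icc (0 : ℤ) (2 * n : ℕ),
            ((C.image (fun c => c + k)) ∩ T).Nonempty)).card : ℝ)
        ≤ 2 * Real.exp (-(n : ℝ) ^ ((1 : ℝ) / 4)) * 2 ^ (2 * n)) := by
  obtain ⟨n₀, hn₀⟩ := eventually_atTop.1 (eventually_log_sq_le_rpow.and (eventually_ge_atTop 1))
  refine ⟨n₀, fun n hn T _ hT ↦ ?_⟩
  obtain ⟨hlog, hn1⟩ := hn₀ n hn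
  obtain ⟨m, hsize, hdecay⟩ := exists_mul_le_two_mul_and_pow_le_exp hn1 hlog hT
  have hU : #(Icc (1 : ℤ) (2 * n : ℕ)) = 2 * n := by rw [Int.card_Icc]; omega
  calc _ ≤ (1 - 2⁻¹ ^ #T : ℝ) ^ m * 2 ^ (2 * n) := by
        refine (card_filter_powerset_forall_image_add_inter_nonempty_le T _ (K := (2 * n : ℕ))
          (by exact_mod_cast hsize)).trans_eq ?_
        rw [hU]
    _ ≤ exp (-(n : ℝ) ^ (1 / 4 : ℝ)) * 2 ^ (2 * n) := by gcongr
    _ ≤ 2 * exp (-(n : ℝ) ^ ((1 : ℝ) / 4)) * 2 ^ (2 * n) := by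
        gcongr
        linarith [exp_pos (-(n : ℝ) ^ (1 / 4 : ℝ))]
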